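/- arXiv:1805.11075 — 4 statements merged into one kernel-verified Lean document; each statement's English description precedes it below -/
import Mathlib

section
/- Let H = ω(n̂₁ + n̂₂) act on the tensor product of two fermionic modes (each 2-dimensional), and let τ(β₁,β₂) be the product of two thermal states at inverse temperatures β₁, β₂ > 0. Then for every unitary U on the 4-dimensional space, Tr[H τ(β₁,β₂)] ≤ Tr[H U τ(β₁,β₂) U†]; i.e., the product of two fermionic thermal states of equal frequency is passive regardless of the temperatures. -/
open Matrix Kronecker Complex

/-!
When `H` and `τ` are both diagonal in the occupation basis, `Tr[H U τ U†] = h ⬝ᵥ (B *ᵥ t)` with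
`B i j = |U i j|²` doubly stochastic. By Birkhoff's theorem `B` is a convex combination of
permutation matrices, so the rearrangement inequality gives `h ⬝ᵥ t ≤ h ⬝ᵥ (B *ᵥ t)` as soon as
the populations `t` antivary with the energies `h`. For two modes of equal frequency a strict
increase of the energy `ω (n₁ + n₂)` forces `(n₁, n₂)` to increase componentwise, because the only
incomparable pair, `(0, 1)` and `(1, 0)`, is degenerate; and each single-mode Gibbs weight
decreases with the occupation, whatever the temperature.
-/

theorem Antivary.dotProduct_le_dotProduct_mulVec {n : Type*} [Fintype n] [DecidableEq n]
    {h t : n → ℝ} (hth : Antivary t h) {B : Matrix n n ℝ} (hB : B ∈ doublyStochastic ℝ n) :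
    h ⬝ᵥ t ≤ h ⬝ᵥ (B *ᵥ t) := by
  rw [← SetLike.mem_coe, doublyStochastic_eq_convexHull_permMatrix] at hB
  refine convexHull_min ?_
    (convex_halfSpace_ge (f := fun M : Matrix n n ℝ ↦ h ⬝ᵥ (M *ᵥ t)) ?_ _) hB
  · rintro _ ⟨σ, rfl⟩
    simpa [permMatrix_mulVec, dotProduct, mul_comm] using
      hth.sum_mul_le_sum_comp_perm_mul (σ := σ)
  · exact ⟨fun B C ↦ by simp [add_mulVec], fun c B ↦ by simp [smul_mulVec]⟩

namespace Matrix

variable {n 𝕜 : Type*} [Fintype n] [DecidableEq n] [RCLike 𝕜]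

lemma sum_norm_sq_row_of_mem_unitaryGroup {U : Matrix n n 𝕜} (hU : U ∈ unitaryGroup n 𝕜)
    (i : n) : ∑ j, ‖U i j‖ ^ 2 = 1 := by
  have h : (U * Uᴴ) i i = 1 := by
    rw [← star_eq_conjTranspose, mem_unitaryGroup_iff.mp hU, one_apply_eq]
  simp only [mul_apply, conjTranspose_apply, ← starRingEnd_apply, RCLike.mul_conj] at h
  exact_mod_cast h

lemma sum_norm_sq_col_of_mem_unitaryGroup {U : Matrix n n 𝕜} (hU : U ∈ unitaryGroup n 𝕜)
    (j : n) : ∑ i, ‖U i j‖ ^ 2 = 1 := by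
  simpa [conjTranspose_apply] using
    sum_norm_sq_row_of_mem_unitaryGroup (Unitary.star_mem hU) j

lemma map_norm_sq_mem_doublyStochastic {U : Matrix n n 𝕜} (hU : U ∈ unitaryGroup n 𝕜) :
    U.map (‖·‖ ^ 2) ∈ doublyStochastic ℝ n :=
  mem_doublyStochastic_iff_sum.2 ⟨fun _ _ ↦ sq_nonneg _,
    sum_norm_sq_row_of_mem_unitaryGroup hU, sum_norm_sq_col_of_mem_unitaryGroup hU⟩

lemma re_trace_diagonal_mul_diagonal (h t : n → ℝ) :
    RCLike.re (diagonal (fun i ↦ (h i : 𝕜)) * diagonal (fun i ↦ (t i : 𝕜))).trace = h ⬝ᵥ t := by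
  simp [diagonal_mul_diagonal, trace_diagonal, dotProduct]

lemma re_trace_diagonal_mul_conj_diagonal (h t : n → ℝ) (U : Matrix n n 𝕜) :
    RCLike.re (diagonal (fun i ↦ (h i : 𝕜)) * (U * diagonal (fun i ↦ (t i : 𝕜)) * Uᴴ)).trace
      = h ⬝ᵥ (U.map (‖·‖ ^ 2) *ᵥ t) := by
  have entry (i : n) : (U * diagonal (fun i ↦ (t i : 𝕜)) * Uᴴ) i i
      = ∑ j, ((‖U i j‖ ^ 2 * t j : ℝ) : 𝕜) := by
    refine Finset.sum_congr rfl fun j _ ↦ ?_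
    dsimp only
    rw [mul_diagonal, conjTranspose_apply, mul_right_comm, ← starRingEnd_apply, RCLike.mul_conj]
    push_cast
    ring
  simp only [trace, diag, diagonal_mul, entry, Finset.mul_sum, ← RCLike.ofReal_mul, map_sum,
    RCLike.ofReal_re, dotProduct, mulVec, map_apply]

theorem re_trace_diagonal_mul_le_of_antivary {h t : n → ℝ} (hth : Antivary t h)
    {U : Matrix n n 𝕜} (hU : U ∈ unitaryGroup n 𝕜) :
    RCLike.re (diagonal (fun i ↦ (h i : 𝕜)) * diagonal (fun i ↦ (t i : 𝕜))).trace
      ≤ RCLike.re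
        (diagonal (fun i ↦ (h i : 𝕜)) * (U * diagonal (fun i ↦ (t i : 𝕜)) * Uᴴ)).trace := by
  rw [re_trace_diagonal_mul_diagonal, re_trace_diagonal_mul_conj_diagonal]
  exact hth.dotProduct_le_dotProduct_mulVec (map_norm_sq_mem_doublyStochastic hU)

end Matrix

noncomputable def fermionGibbsWeight (ω β : ℝ) (k : Fin 2) : ℝ :=
  (1 + Real.exp (-β * ω))⁻¹ * Real.exp (-β * ω) ^ (k : ℕ)

lemma fermionGibbsWeight_nonneg (ω β : ℝ) (k : Fin 2) : 0 ≤ fermionGibbsWeight ω β k := by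
  unfold fermionGibbsWeight; positivity

lemma fermionGibbsWeight_antitone {ω β : ℝ} (hβω : 0 ≤ β * ω) :
    Antitone (fermionGibbsWeight ω β) := fun k l hkl ↦ by
  have hexp : Real.exp (-β * ω) ≤ 1 := Real.exp_le_one_iff.2 (by linarith)
  exact mul_le_mul_of_nonneg_left (pow_le_pow_of_le_one (Real.exp_nonneg _) hexp hkl)
    (by positivity)

lemma smul_diagonal_eq_diagonal_fermionGibbsWeight (ω β : ℝ) :
    ((1 + Real.exp (-β * ω))⁻¹ : ℝ) • diagonal ![1, (Real.exp (-β * ω) : ℂ)]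
      = diagonal (fun k ↦ (fermionGibbsWeight ω β k : ℂ)) := by
  rw [← diagonal_smul]
  congr 1
  ext k
  fin_cases k <;> simp [fermionGibbsWeight]

lemma smul_number_kronecker_add_eq_diagonal (ω : ℝ) :
    (ω : ℂ) • (diagonal ![0, 1] ⊗ₖ (1 : Matrix (Fin 2) (Fin 2) ℂ)
      + (1 : Matrix (Fin 2) (Fin 2) ℂ) ⊗ₖ diagonal ![0, 1])
      = diagonal (fun p : Fin 2 × Fin 2 ↦ ((ω * (((p.1 : ℕ) : ℝ) + (p.2 : ℕ)) : ℝ) : ℂ)) := by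
  rw [← diagonal_one, diagonal_kronecker_diagonal, diagonal_kronecker_diagonal, diagonal_add,
    ← diagonal_smul]
  congr 1
  ext ⟨i, j⟩
  fin_cases i <;> fin_cases j <;> simp

lemma Fin.two_prod_le_of_add_lt :
    ∀ p q : Fin 2 × Fin 2, (p.1 : ℕ) + p.2 < q.1 + q.2 → p ≤ q := by
  decide

lemma antivary_mul_totalOccupation {f g : Fin 2 → ℝ} (hf : Antitone f) (hg : Antitone g)
    (hf₀ : ∀ k, 0 ≤ f k) (hg₀ : ∀ k, 0 ≤ g k) {ω : ℝ} (hω : 0 < ω) :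
    Antivary (fun p : Fin 2 × Fin 2 ↦ f p.1 * g p.2)
      (fun p ↦ ω * (((p.1 : ℕ) : ℝ) + (p.2 : ℕ))) := fun p q hpq ↦ by
  have hpq' : p ≤ q :=
    Fin.two_prod_le_of_add_lt p q (by exact_mod_cast lt_of_mul_lt_mul_left hpq hω.le)
  exact mul_le_mul (hf hpq'.1) (hg hpq'.2) (hg₀ _) (hf₀ _)

/-- the product of two single-fermion thermal states of equal
frequency `ω` at inverse temperatures `β₁, β₂ > 0` is passive with respect to
`H = ω(n̂⊗1 + 1⊗n̂)`: for every unitary `U` on the 4-dimensional space,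
`Tr[H τ] ≤ Tr[H U τ U†]`. -/
theorem stmt1 (ω β₁ β₂ : ℝ) (hω : 0 < ω) (hβ₁ : 0 < β₁) (hβ₂ : 0 < β₂)
    (nhat : Matrix (Fin 2) (Fin 2) ℂ) (hn : nhat = Matrix.diagonal ![0, 1])
    (thermal : ℝ → Matrix (Fin 2) (Fin 2) ℂ)
    (hth : ∀ β, thermal β = ((1 + Real.exp (-β * ω))⁻¹ : ℝ) •
      Matrix.diagonal ![1, (Real.exp (-β * ω) : ℂ)])
    (H τ : Matrix (Fin 2 × Fin 2) (Fin 2 × Fin 2) ℂ)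
    (hH : H = (ω : ℂ) • (nhat ⊗ₖ (1 : Matrix (Fin 2) (Fin 2) ℂ)
      + (1 : Matrix (Fin 2) (Fin 2) ℂ) ⊗ₖ nhat))
    (hτ : τ = thermal β₁ ⊗ₖ thermal β₂) :
    ∀ U : Matrix (Fin 2 × Fin 2) (Fin 2 × Fin 2) ℂ,
      U ∈ Matrix.unitaryGroup (Fin 2 × Fin 2) ℂ →
      (H * τ).trace.re ≤ (H * (U * τ * Uᴴ)).trace.re := by
  intro U hU
  have hτ' : τ = diagonal (fun p : Fin 2 × Fin 2 ↦
      ((fermionGibbsWeight ω β₁ p.1 * fermionGibbsWeight ω β₂ p.2 : ℝ) : ℂ)) := by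
    rw [hτ, hth, hth, smul_diagonal_eq_diagonal_fermionGibbsWeight,
      smul_diagonal_eq_diagonal_fermionGibbsWeight, diagonal_kronecker_diagonal]
    simp only [ofReal_mul]
  rw [hH, hn, smul_number_kronecker_add_eq_diagonal, hτ']
  have hanti := antivary_mul_totalOccupation (fermionGibbsWeight_antitone (by positivity))
    (fermionGibbsWeight_antitone (by positivity)) (fermionGibbsWeight_nonneg ω β₁)
    (fermionGibbsWeight_nonneg ω β₂) hω
  exact re_trace_diagonal_mul_le_of_antivary hanti hU
end

section
/- Let τ(β₁,β₂,β₃) be the product of three single-fermion thermal states of equal frequency ω > 0 at inverse temperatures β₁, β₂, β₃ > 0, with total Hamiltonian H = ω(n̂₁+n̂₂+n̂₃). If β₂ > β₁ + β₃, then τ(β₁,β₂,β₃) is non-passive: the unitary U that swaps the Fock basis states |010⟩ and |101⟩ (acting as identity elsewhere) satisfies Tr[H τ] > Tr[H U τ U†]. -/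
/-!
Both `H` and `τ` are diagonal in the Fock basis, and conjugating a diagonal matrix by the
permutation matrix of the transposition `a ↔ b` exchanges its entries at `a` and `b`. Hence the
energy changes by `(E a - E b) (p b - p a)`, where `E` and `p` are the energies and populations.
With `a = |010⟩`, `b = |101⟩` this is `-ω (p₁₀₁ - p₀₁₀)`, and `p₁₀₁ > p₀₁₀` is the population
inversion `e^{-β₁ω} e^{-β₃ω} > e^{-β₂ω}`, i.e. `β₂ > β₁ + β₃`.
-/

open Matrix Kronecker

namespace Matrix

variable {n R : Type*} [Fintype n] [DecidableEq n] [CommRing R]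

theorem permMatrix_mul_diagonal_mul_transpose (σ : Equiv.Perm n) (t : n → R) :
    σ.permMatrix R * diagonal t * (σ.permMatrix R)ᵀ = diagonal (t ∘ σ) := by
  rw [transpose_permMatrix, PEquiv.toMatrix_toPEquiv_mul, PEquiv.mul_toMatrix_toPEquiv]
  simp only [submatrix_submatrix, Function.comp_id, Function.id_comp]
  exact submatrix_diagonal_equiv t σ

theorem trace_diagonal_mul_diagonal (d t : n → R) :
    trace (diagonal d * diagonal t) = ∑ i, d i * t i := by
  simp [diagonal_mul_diagonal, trace_diagonal]

theorem trace_diagonal_mul_conj_swap (d t : n → R) {a b : n} (hab : a ≠ b) :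
    trace (diagonal d * ((Equiv.swap a b).permMatrix R * diagonal t *
      ((Equiv.swap a b).permMatrix R)ᵀ)) =
      trace (diagonal d * diagonal t) + (d a - d b) * (t b - t a) := by
  rw [permMatrix_mul_diagonal_mul_transpose, trace_diagonal_mul_diagonal,
    trace_diagonal_mul_diagonal, ← sub_eq_iff_eq_add', ← Finset.sum_sub_distrib,
    Fintype.sum_eq_add a b hab]
  · simp only [Function.comp_apply, Equiv.swap_apply_left, Equiv.swap_apply_right]
    ring
  · intro i ⟨hia, hib⟩
    simp [Equiv.swap_apply_of_ne_of_ne hia hib]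

end Matrix

theorem stmt4_general (ω β₁ β₂ β₃ : ℝ) (hω : 0 < ω)
    (hcond : β₁ + β₃ < β₂)
    (nhat : Matrix (Fin 2) (Fin 2) ℝ) (hn : nhat = Matrix.diagonal ![0, 1])
    (thermal : ℝ → Matrix (Fin 2) (Fin 2) ℝ)
    (hth : ∀ β, thermal β = (1 + Real.exp (-β * ω))⁻¹ •
      Matrix.diagonal ![1, Real.exp (-β * ω)])
    (H τ U : Matrix ((Fin 2 × Fin 2) × Fin 2) ((Fin 2 × Fin 2) × Fin 2) ℝ)
    (hH : H = ω • ((nhat ⊗ₖ (1 : Matrix (Fin 2) (Fin 2) ℝ)) ⊗ₖ (1 : Matrix (Fin 2) (Fin 2) ℝ)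
      + ((1 : Matrix (Fin 2) (Fin 2) ℝ) ⊗ₖ nhat) ⊗ₖ (1 : Matrix (Fin 2) (Fin 2) ℝ)
      + ((1 : Matrix (Fin 2) (Fin 2) ℝ) ⊗ₖ (1 : Matrix (Fin 2) (Fin 2) ℝ)) ⊗ₖ nhat))
    (hτ : τ = (thermal β₁ ⊗ₖ thermal β₂) ⊗ₖ thermal β₃)
    (hU : U = (Equiv.swap (((0 : Fin 2), (1 : Fin 2)), (0 : Fin 2))
      (((1 : Fin 2), (0 : Fin 2)), (1 : Fin 2))).permMatrix ℝ) :
    (H * (U * τ * Uᵀ)).trace < (H * τ).trace := by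
  subst hn hH hτ hU
  simp only [hth, ← diagonal_smul, ← diagonal_one, diagonal_kronecker_diagonal, diagonal_add]
  rw [trace_diagonal_mul_conj_swap _ _ (by decide), add_lt_iff_neg_left]
  simp only [Fin.isValue, Pi.smul_apply, cons_val_zero, cons_val_one, cons_val_fin_one,
    smul_eq_mul, neg_mul, mul_one, one_mul, zero_add, add_zero]
  set x := Real.exp (-(β₁ * ω))
  set y := Real.exp (-(β₂ * ω))
  set z := Real.exp (-(β₃ * ω))
  have inversion : y < x * z := by
    rw [← Real.exp_add]
    exact Real.exp_lt_exp.2 (by nlinarith)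
  calc _ = -(ω * ((1 + x)⁻¹ * (1 + y)⁻¹ * (1 + z)⁻¹) * (x * z - y)) := by ring
    _ < 0 := neg_neg_of_pos (by have := sub_pos.2 inversion; positivity)

/-- for the product `τ(β₁,β₂,β₃)` of three single-fermion thermal
states of equal frequency `ω > 0`, with total Hamiltonian
`H = ω(n̂₁+n̂₂+n̂₃)`, if `β₂ > β₁ + β₃` then the unitary swapping the Fock
states `|010⟩` and `|101⟩` strictly lowers the average energy:
`Tr[H τ] > Tr[H U τ Uᵀ]`; hence `τ` is non-passive. -/
theorem stmt4 (ω β₁ β₂ β₃ : ℝ) (hω : 0 < ω)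
    (hβ₁ : 0 < β₁) (hβ₂ : 0 < β₂) (hβ₃ : 0 < β₃)
    (hcond : β₁ + β₃ < β₂)
    (nhat : Matrix (Fin 2) (Fin 2) ℝ) (hn : nhat = Matrix.diagonal ![0, 1])
    (thermal : ℝ → Matrix (Fin 2) (Fin 2) ℝ)
    (hth : ∀ β, thermal β = (1 + Real.exp (-β * ω))⁻¹ •
      Matrix.diagonal ![1, Real.exp (-β * ω)])
    (H τ U : Matrix ((Fin 2 × Fin 2) × Fin 2) ((Fin 2 × Fin 2) × Fin 2) ℝ)
    (hH : H = ω • ((nhat ⊗ₖ (1 : Matrix (Fin 2) (Fin 2) ℝ)) ⊗ₖ (1 : Matrix (Fin 2) (Fin 2) ℝ)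
      + ((1 : Matrix (Fin 2) (Fin 2) ℝ) ⊗ₖ nhat) ⊗ₖ (1 : Matrix (Fin 2) (Fin 2) ℝ)
      + ((1 : Matrix (Fin 2) (Fin 2) ℝ) ⊗ₖ (1 : Matrix (Fin 2) (Fin 2) ℝ)) ⊗ₖ nhat))
    (hτ : τ = (thermal β₁ ⊗ₖ thermal β₂) ⊗ₖ thermal β₃)
    (hU : U = (Equiv.swap (((0 : Fin 2), (1 : Fin 2)), (0 : Fin 2))
      (((1 : Fin 2), (0 : Fin 2)), (1 : Fin 2))).permMatrix ℝ) :
    (H * (U * τ * Uᵀ)).trace < (H * τ).trace :=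
  stmt4_general ω β₁ β₂ β₃ hω hcond nhat hn thermal hth H τ U hH hτ hU
end

section
/- A real antisymmetric matrix Γ satisfies iΓ ≤ 𝟙 (as a Hermitian matrix inequality) if and only if Γ Γᵀ ≤ 𝟙, with equality ΓΓᵀ = 𝟙 if and only if all Williamson parameters satisfy |λⱼ| = 1. -/
/-!
For `v = a + i b` with `a, b` real, antisymmetry of `Γ` gives
`v* (1 - iΓ) v = |a|² + |b|² + 2 ⟨a, Γ b⟩ = |a + Γ b|² + ⟨b, (1 - Γ Γᵀ) b⟩`.
Both terms are nonnegative when `Γ Γᵀ ≤ 1`, and the first one vanishes at `a = -Γ b`, which gives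
the converse. The condition `Γ Γᵀ = 1` is invariant under orthogonal conjugation, and the
Williamson form `D = ⨁ⱼ [[0, λⱼ], [-λⱼ, 0]]` satisfies `D Dᵀ = diag(λⱼ²)`.
-/

open Matrix
open scoped ComplexOrder

namespace Matrix

variable {ι : Type*} [Fintype ι]

section CommRing

variable {R : Type*} [CommRing R] {Γ : Matrix ι ι R}

lemma dotProduct_mulVec_eq_neg_of_transpose_eq_neg (hΓ : Γᵀ = -Γ) (a b : ι → R) :
    b ⬝ᵥ (Γ *ᵥ a) = -(a ⬝ᵥ (Γ *ᵥ b)) := by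
  rw [dotProduct_mulVec, ← mulVec_transpose, hΓ, neg_mulVec, neg_dotProduct, dotProduct_comm]

lemma dotProduct_mulVec_self_eq_zero_of_transpose_eq_neg [NoZeroDivisors R] [CharZero R]
    (hΓ : Γᵀ = -Γ) (a : ι → R) : a ⬝ᵥ (Γ *ᵥ a) = 0 := by
  have h := dotProduct_mulVec_eq_neg_of_transpose_eq_neg hΓ a a
  rwa [eq_neg_iff_add_eq_zero, ← two_mul, mul_eq_zero, or_iff_right two_ne_zero] at h

lemma dotProduct_one_sub_mul_transpose_mulVec [DecidableEq ι] (Γ : Matrix ι ι R) (b : ι → R) :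
    b ⬝ᵥ ((1 - Γ * Γᵀ) *ᵥ b) = b ⬝ᵥ b - (Γᵀ *ᵥ b) ⬝ᵥ (Γᵀ *ᵥ b) := by
  rw [sub_mulVec, one_mulVec, dotProduct_sub, ← mulVec_mulVec, dotProduct_mulVec,
    ← mulVec_transpose]

lemma quadratic_form_eq_of_transpose_eq_neg [DecidableEq ι] (hΓ : Γᵀ = -Γ) (a b : ι → R) :
    a ⬝ᵥ a + b ⬝ᵥ b + 2 * (a ⬝ᵥ (Γ *ᵥ b))
      = (a + Γ *ᵥ b) ⬝ᵥ (a + Γ *ᵥ b) + b ⬝ᵥ ((1 - Γ * Γᵀ) *ᵥ b) := by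
  rw [dotProduct_one_sub_mul_transpose_mulVec, hΓ, neg_mulVec, neg_dotProduct, dotProduct_neg,
    neg_neg, add_dotProduct, dotProduct_add, dotProduct_add, dotProduct_comm (Γ *ᵥ b) a]
  ring

end CommRing

section Real

variable {Γ : Matrix ι ι ℝ}

lemma map_ofReal_mulVec (a : ι → ℝ) :
    Γ.map (↑) *ᵥ (fun k => (a k : ℂ)) = fun k => ((Γ *ᵥ a) k : ℂ) :=
  funext fun k => (RingHom.map_mulVec Complex.ofRealHom Γ a k).symm

lemma ofReal_dotProduct (a b : ι → ℝ) :
    (fun k => (a k : ℂ)) ⬝ᵥ (fun k => (b k : ℂ)) = ((a ⬝ᵥ b : ℝ) : ℂ) := by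
  simp [dotProduct]

omit [Fintype ι] in
lemma isHermitian_I_smul_map_ofReal (hΓ : Γᵀ = -Γ) :
    (Complex.I • Γ.map ((↑) : ℝ → ℂ)).IsHermitian := by
  ext i j
  have hij := congr_fun₂ hΓ j i
  simp only [transpose_apply, neg_apply] at hij
  simp [hij]

variable [DecidableEq ι]

lemma star_dotProduct_one_sub_I_smul_mulVec (hΓ : Γᵀ = -Γ) (a b : ι → ℝ) :
    star (fun k => (a k + b k * Complex.I : ℂ))
        ⬝ᵥ ((1 - Complex.I • Γ.map (↑)) *ᵥ fun k => (a k + b k * Complex.I : ℂ))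
      = ((a ⬝ᵥ a + b ⬝ᵥ b + 2 * (a ⬝ᵥ (Γ *ᵥ b)) : ℝ) : ℂ) := by
  set v : ι → ℂ := fun k => a k + b k * Complex.I
  set A : ι → ℂ := fun k => (a k : ℂ)
  set B : ι → ℂ := fun k => (b k : ℂ)
  have hv : v = A + Complex.I • B := funext fun k => by simp [v, A, B, mul_comm]
  have hstar : star v = A - Complex.I • B := funext fun k => by
    simp [v, A, B, Complex.ext_iff]
  rw [hstar, hv]
  simp only [sub_mulVec, one_mulVec, smul_mulVec, mulVec_add, mulVec_smul, A, B,
    map_ofReal_mulVec, sub_dotProduct, dotProduct_sub, dotProduct_add,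
    smul_dotProduct, dotProduct_smul, smul_eq_mul, ofReal_dotProduct]
  rw [dotProduct_mulVec_self_eq_zero_of_transpose_eq_neg hΓ a,
    dotProduct_mulVec_self_eq_zero_of_transpose_eq_neg hΓ b,
    dotProduct_mulVec_eq_neg_of_transpose_eq_neg hΓ a b, dotProduct_comm b a]
  push_cast
  linear_combination (-((b ⬝ᵥ b : ℝ) : ℂ) - 2 * ((a ⬝ᵥ (Γ *ᵥ b) : ℝ) : ℂ)) * Complex.I_sq

lemma isHermitian_one_sub_mul_transpose (Γ : Matrix ι ι ℝ) : (1 - Γ * Γᵀ).IsHermitian :=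
  isHermitian_one.sub (by simpa using isHermitian_mul_conjTranspose_self Γ)

theorem posSemidef_one_sub_I_smul_iff (hΓ : Γᵀ = -Γ) :
    (1 - Complex.I • Γ.map ((↑) : ℝ → ℂ)).PosSemidef ↔ (1 - Γ * Γᵀ).PosSemidef := by
  constructor
  · intro h
    refine .of_dotProduct_mulVec_nonneg (isHermitian_one_sub_mul_transpose Γ) fun b => ?_
    have hb := h.dotProduct_mulVec_nonneg fun k => ((-(Γ *ᵥ b)) k + b k * Complex.I : ℂ)
    rwa [star_dotProduct_one_sub_I_smul_mulVec hΓ, quadratic_form_eq_of_transpose_eq_neg hΓ,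
      neg_add_cancel, zero_dotProduct, zero_add, Complex.zero_le_real] at hb
  · intro h
    refine .of_dotProduct_mulVec_nonneg (isHermitian_one.sub (isHermitian_I_smul_map_ofReal hΓ))
      fun v => ?_
    have hv : v = fun k => ((v k).re + (v k).im * Complex.I : ℂ) :=
      funext fun k => (Complex.re_add_im _).symm
    rw [hv, star_dotProduct_one_sub_I_smul_mulVec hΓ, quadratic_form_eq_of_transpose_eq_neg hΓ,
      Complex.zero_le_real]
    exact add_nonneg (dotProduct_star_self_nonneg _) (h.dotProduct_mulVec_nonneg _)

end Real

section Orthogonal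

variable {R : Type*} [CommRing R] [DecidableEq ι] {O : Matrix ι ι R}

lemma conj_mul_transpose_eq_one_iff (hO : O * Oᵀ = 1) (Γ : Matrix ι ι R) :
    (O * Γ * Oᵀ) * (O * Γ * Oᵀ)ᵀ = 1 ↔ Γ * Γᵀ = 1 := by
  have hO' : Oᵀ * O = 1 := mul_eq_one_comm.mp hO
  have hconj : (O * Γ * Oᵀ) * (O * Γ * Oᵀ)ᵀ = O * (Γ * Γᵀ) * Oᵀ := by
    simp only [transpose_mul, transpose_transpose, Matrix.mul_assoc]
    rw [← Matrix.mul_assoc Oᵀ O, hO', Matrix.one_mul]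
  rw [hconj]
  constructor
  · intro h
    calc Γ * Γᵀ = Oᵀ * (O * (Γ * Γᵀ) * Oᵀ) * O := by
          simp only [← Matrix.mul_assoc, hO', Matrix.one_mul]
          rw [Matrix.mul_assoc, hO', Matrix.mul_one]
      _ = 1 := by rw [h, Matrix.mul_one, hO']
  · intro h
    rw [h, Matrix.mul_one, hO]

end Orthogonal

section Williamson

variable [DecidableEq ι] {R : Type*} [CommRing R]

def williamsonForm (lam : ι → R) : Matrix (ι × Fin 2) (ι × Fin 2) R :=
  fun p q => if p.1 = q.1 then !![0, lam p.1; -lam p.1, 0] p.2 q.2 else 0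

lemma williamsonForm_mul_transpose (lam : ι → R) :
    williamsonForm lam * (williamsonForm lam)ᵀ = diagonal fun p => lam p.1 ^ 2 := by
  ext ⟨i, s⟩ ⟨k, t⟩
  by_cases hik : i = k
  · subst hik
    fin_cases s <;> fin_cases t <;>
      simp [williamsonForm, mul_apply, Fintype.sum_prod_type, Fin.sum_univ_two, sq]
  · simp [williamsonForm, mul_apply, Fintype.sum_prod_type, hik]

lemma williamsonForm_mul_transpose_eq_one_iff [LinearOrder R] [IsStrictOrderedRing R] (lam : ι → R) :
    williamsonForm lam * (williamsonForm lam)ᵀ = 1 ↔ ∀ j, |lam j| = 1 := by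
  rw [williamsonForm_mul_transpose, diagonal_eq_one, funext_iff, Prod.forall]
  refine forall_congr' fun j => ?_
  rw [← abs_pow_eq_one _ two_ne_zero, abs_sq]
  simp

end Williamson

end Matrix

/-- a real antisymmetric matrix `Γ` satisfies `iΓ ≤ 𝟙` (as a
Hermitian matrix inequality) iff `Γ Γᵀ ≤ 𝟙`; moreover, given any Williamson
block-diagonalization `O Γ Oᵀ = ⨁ⱼ [[0, λⱼ],[−λⱼ, 0]]` with `O ∈ SO(2n)`,
equality `Γ Γᵀ = 𝟙` holds iff all parameters satisfy `|λⱼ| = 1`. -/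
theorem stmt11 (n : ℕ) (Γ : Matrix (Fin n × Fin 2) (Fin n × Fin 2) ℝ)
    (hΓ : Γᵀ = -Γ) :
    (((1 : Matrix (Fin n × Fin 2) (Fin n × Fin 2) ℂ)
        - Complex.I • Γ.map (fun x => (x : ℂ))).PosSemidef
      ↔ ((1 : Matrix (Fin n × Fin 2) (Fin n × Fin 2) ℝ) - Γ * Γᵀ).PosSemidef)
    ∧ ∀ (O : Matrix (Fin n × Fin 2) (Fin n × Fin 2) ℝ) (lam : Fin n → ℝ),
        O * Oᵀ = 1 → O.det = 1 →
        O * Γ * Oᵀ = (fun p q =>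
          if p.1 = q.1 then !![0, lam p.1; -lam p.1, 0] p.2 q.2 else 0) →
        (Γ * Γᵀ = 1 ↔ ∀ j, |lam j| = 1) := by
  refine ⟨posSemidef_one_sub_I_smul_iff hΓ, fun O lam hO _ hblock => ?_⟩
  rw [← conj_mul_transpose_eq_one_iff hO, hblock]
  exact williamsonForm_mul_transpose_eq_one_iff lam
end

section
/- Applying the squeezing with optimal parameter r = −(1/2) arctan λ, λ = (e₁+e₂)/(a+b), to the standard-form covariance matrix with blocks a, b and correlations e₁, e₂ yields new parameters ã′ = ((a+b)/2)√(1+λ²) + (a−b)/2, b̃′ = ((a+b)/2)√(1+λ²) − (a−b)/2, and off-diagonal entries ±e with e = (e₁−e₂)/2; i.e., a′ as given by a′ = a cos²r − b sin²r − ((e₁+e₂)/2) sin 2r evaluates to ã′, and analogously for b′. -/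
/-!
Write `θ = 2r = -arctan λ`. By the half-angle formulas the transformed parameters are affine in
`(cos θ, sin θ)`, and the rotation by `θ` sends `(1, λ)` to `(√(1 + λ²), 0)`. Since
`(a + b, e₁ + e₂) = (a + b) (1, λ)`, the correlations `e₁ + e₂` merge into `(a + b) √(1 + λ²)` in
`a′, b′` and cancel in `e₁′, e₂′`.
-/

open Real

lemma cos_arctan_add_mul_sin_arctan (x : ℝ) :
    cos (arctan x) + x * sin (arctan x) = √(1 + x ^ 2) := by
  have hpos : 0 < √(1 + x ^ 2) := sqrt_pos.mpr (by positivity)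
  rw [cos_arctan, sin_arctan]
  field_simp
  rw [sq_sqrt (by positivity)]

lemma mul_cos_arctan_sub_sin_arctan (x : ℝ) : x * cos (arctan x) - sin (arctan x) = 0 := by
  rw [cos_arctan, sin_arctan]
  ring

/-- applying the two-mode squeezing with the optimal parameter
`r = −(1/2) arctan λ`, `λ = (e₁+e₂)/(a+b)` (with `a+b > 0`), to the
standard-form covariance-matrix parameters `a, b, e₁, e₂` yields
`a′ = ((a+b)/2)√(1+λ²) + (a−b)/2`, `b′ = ((a+b)/2)√(1+λ²) − (a−b)/2`,
`e₁′ = (e₁−e₂)/2` and `e₂′ = −(e₁−e₂)/2`. -/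
theorem stmt15 (a b e₁ e₂ : ℝ) (hab : 0 < a + b)
    (lam r : ℝ) (hlam : lam = (e₁ + e₂) / (a + b))
    (hr : r = -(1 / 2) * Real.arctan lam)
    (a' b' e₁' e₂' : ℝ)
    (ha' : a' = a * Real.cos r ^ 2 - b * Real.sin r ^ 2
      - (e₁ + e₂) / 2 * Real.sin (2 * r))
    (hb' : b' = -a * Real.sin r ^ 2 + b * Real.cos r ^ 2
      - (e₁ + e₂) / 2 * Real.sin (2 * r))
    (he₁' : e₁' = (a + b) / 2 * Real.sin (2 * r)
      + e₁ * Real.cos r ^ 2 - e₂ * Real.sin r ^ 2)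
    (he₂' : e₂' = (a + b) / 2 * Real.sin (2 * r)
      + e₂ * Real.cos r ^ 2 - e₁ * Real.sin r ^ 2) :
    a' = (a + b) / 2 * Real.sqrt (1 + lam ^ 2) + (a - b) / 2
      ∧ b' = (a + b) / 2 * Real.sqrt (1 + lam ^ 2) - (a - b) / 2
      ∧ e₁' = (e₁ - e₂) / 2
      ∧ e₂' = -((e₁ - e₂) / 2) := by
  have hsum : e₁ + e₂ = lam * (a + b) := by
    rw [hlam, div_mul_cancel₀ _ hab.ne']
  have h2r : 2 * r = -arctan lam := by rw [hr]; ring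
  have hcos : cos r ^ 2 = 1 / 2 + cos (arctan lam) / 2 := by
    rw [cos_sq, h2r, cos_neg]
  have hsin : sin r ^ 2 = 1 / 2 - cos (arctan lam) / 2 := by
    rw [sin_sq_eq_half_sub, h2r, cos_neg]
  have hsin2 : sin (2 * r) = -sin (arctan lam) := by rw [h2r, sin_neg]
  have hrot := cos_arctan_add_mul_sin_arctan lam
  have hrot' := mul_cos_arctan_sub_sin_arctan lam
  rw [hcos, hsin, hsin2] at ha' hb' he₁' he₂'
  rw [hsum] at ha' hb'
  refine ⟨?_, ?_, ?_, ?_⟩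
  · linear_combination ha' + (a + b) / 2 * hrot
  · linear_combination hb' + (a + b) / 2 * hrot
  · linear_combination he₁' + (a + b) / 2 * hrot' + cos (arctan lam) / 2 * hsum
  · linear_combination he₂' + (a + b) / 2 * hrot' + cos (arctan lam) / 2 * hsum
end
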